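/- Let g ≥ 1, let S_1 ≤ S_2 ≤ … ≤ S_g be positive integers, set A_i := Σ_{k=1}^g min(S_i, S_k), let L be an integer with L > 2·A_g, and let B be the g×g matrix with entries B_{ij} := (L − 2A_i)·δ_{ij} + 2·min(S_i, S_j). Let s := (S_1, …, S_g) ∈ ℝ^g, e := (1,…,1) ∈ ℝ^g, and c ∈ ℝ^g. For n, t ∈ ℤ define Θ_n^t := Θ(n·e − t·s + c; B) and U_n^t := Θ_n^t + Θ_{n+1}^{t+1} − Θ_{n+1}^t − Θ_n^{t+1}. Then U satisfies the periodic boundary condition U_{n+L}^t = U_n^t for all n, t ∈ ℤ. -/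

import Mathlib

/-!
Shifting the summation lattice `m ↦ m + r` in the minimum defining `Θ` gives the
quasi-periodicity `Θ(z + B r) = Θ(z) - ½⟨r, B r⟩ - ⟨r, z⟩`, provided the minimum is finite.
Every row sum of `B` equals `L`, so `r = e` shows that `Θ_{n+L}^t - Θ_n^t` is affine in
`(n, t)`, and the second difference `U` annihilates it. The minimum is finite because `B - I`
is positive semidefinite: its diagonal part `L - 2 A_i - 1` is nonnegative, and
`(min (S_i, S_j))` is the Gram matrix of the indicator vectors of `[0, S_i)`.
-/

open scoped BigOperators

/-- The tropical theta function `Θ(z; B) = min_{m ∈ ℤ^g} [(1/2)⟨m, B m⟩ + ⟨m, z⟩]`,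
defined as an infimum. -/
noncomputable def tropTheta (g : ℕ) (B : Matrix (Fin g) (Fin g) ℝ) (z : Fin g → ℝ) : ℝ :=
  sInf {x : ℝ | ∃ m : Fin g → ℤ,
    x = (1/2) * ∑ i, (m i : ℝ) * (∑ j, B i j * (m j : ℝ)) + ∑ i, (m i : ℝ) * z i}

open Matrix Set

section TropicalTheta

variable {g : ℕ} (B : Matrix (Fin g) (Fin g) ℝ)

noncomputable def tropThetaTerm (z m : Fin g → ℝ) : ℝ := 1 / 2 * (m ⬝ᵥ B *ᵥ m) + m ⬝ᵥ z

theorem tropTheta_eq_iInf (z : Fin g → ℝ) :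
    tropTheta g B z = ⨅ m : Fin g → ℤ, tropThetaTerm B z (Int.cast ∘ m) :=
  congrArg sInf <| Set.ext fun _ => exists_congr fun _ => eq_comm

theorem tropThetaTerm_add_mulVec {B} (hB : Bᵀ = B) (z m r : Fin g → ℝ) :
    tropThetaTerm B (z + B *ᵥ r) m = tropThetaTerm B z (m + r) - tropThetaTerm B z r := by
  have hsymm : r ⬝ᵥ B *ᵥ m = m ⬝ᵥ B *ᵥ r := by
    rw [dotProduct_mulVec, ← hB, vecMul_transpose, hB, dotProduct_comm]
  simp only [tropThetaTerm, dotProduct_add, add_dotProduct, mulVec_add, hsymm]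
  ring

theorem bddBelow_range_tropThetaTerm {ε : ℝ} (hε : 0 < ε)
    (hcoercive : ∀ x, ε * (x ⬝ᵥ x) ≤ x ⬝ᵥ B *ᵥ x) (z : Fin g → ℝ) :
    BddBelow (range fun m : Fin g → ℤ => tropThetaTerm B z (Int.cast ∘ m)) := by
  refine ⟨-(z ⬝ᵥ z) / (2 * ε), ?_⟩
  rintro _ ⟨m, rfl⟩
  set x : Fin g → ℝ := Int.cast ∘ m
  have hsq : -(z ⬝ᵥ z) / (2 * ε) ≤ ε / 2 * (x ⬝ᵥ x) + x ⬝ᵥ z := by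
    rw [div_le_iff₀ (by positivity)]
    simp only [dotProduct, Finset.mul_sum, Finset.sum_mul, ← Finset.sum_add_distrib,
      ← Finset.sum_neg_distrib]
    refine Finset.sum_le_sum fun i _ => ?_
    nlinarith [sq_nonneg (ε * x i + z i)]
  have := hcoercive x
  simp only [tropThetaTerm]
  linarith

-- Without `hbdd` both infima could be the junk value `sInf ∅ = 0` of an unbounded set.
theorem tropTheta_add_mulVec {B} (hB : Bᵀ = B) {z : Fin g → ℝ}
    (hbdd : BddBelow (range fun m : Fin g → ℤ => tropThetaTerm B z (Int.cast ∘ m)))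
    (r : Fin g → ℤ) :
    tropTheta g B (z + B *ᵥ (Int.cast ∘ r)) =
      tropTheta g B z - tropThetaTerm B z (Int.cast ∘ r) := by
  have hcast : ∀ m : Fin g → ℤ, (Int.cast ∘ m + Int.cast ∘ r : Fin g → ℝ) = Int.cast ∘ (m + r) :=
    fun m => funext fun i => (Int.cast_add (m i) (r i)).symm
  set C := tropThetaTerm B z (Int.cast ∘ r)
  simp only [tropTheta_eq_iInf, tropThetaTerm_add_mulVec hB, hcast, sub_eq_add_neg]
  exact ((Equiv.addRight r).surjective.iInf_comp
    fun m => tropThetaTerm B z (Int.cast ∘ m) + -C).trans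
      ((OrderIso.addRight (-C)).map_ciInf hbdd).symm

end TropicalTheta

section MinMatrix

theorem intCast_min_eq_sum_Ico {a b T : ℤ} (ha : 0 ≤ a) (hb : 0 ≤ b) (hT : a ≤ T) :
    ((min a b : ℤ) : ℝ) =
      ∑ t ∈ Finset.Ico 0 T, (if t < a then 1 else 0) * (if t < b then (1 : ℝ) else 0) := by
  simp only [ite_zero_mul_ite_zero, one_mul, Finset.sum_boole]
  have : (Finset.Ico 0 T).filter (fun t => t < a ∧ t < b) = Finset.Ico 0 (min a b) := by
    ext t; simp only [Finset.mem_filter, Finset.mem_Ico, lt_min_iff]; omega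
  rw [this, Int.card_Ico, sub_zero]
  exact_mod_cast (Int.toNat_of_nonneg (le_min ha hb)).symm

variable {ι : Type*}

def minMatrix (S : ι → ℤ) : Matrix ι ι ℝ := of fun i j => ((min (S i) (S j) : ℤ) : ℝ)

theorem minMatrix_transpose (S : ι → ℤ) : (minMatrix S)ᵀ = minMatrix S := by
  ext i j; simp [minMatrix, min_comm]

theorem posSemidef_minMatrix [Fintype ι] {S : ι → ℤ} (hS : ∀ i, 0 ≤ S i) :
    (minMatrix S).PosSemidef := by
  let T := ∑ i, S i
  let A : Matrix (Finset.Ico 0 T) ι ℝ := of fun t i => if (t : ℤ) < S i then 1 else 0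
  convert posSemidef_conjTranspose_mul_self A
  ext i j
  rw [minMatrix, of_apply, intCast_min_eq_sum_Ico (hS i) (hS j)
    (Finset.single_le_sum (fun k _ => hS k) (Finset.mem_univ i)), mul_apply,
    ← Finset.sum_coe_sort]
  simp [A, T]

end MinMatrix

section BoxBallPeriodMatrix

variable {ι : Type*} [Fintype ι] [DecidableEq ι]

def boxBallPeriodMatrix (L : ℤ) (S : ι → ℤ) : Matrix ι ι ℝ :=
  diagonal (fun i => ((L - 2 * ∑ k, min (S i) (S k) : ℤ) : ℝ)) + (2 : ℝ) • minMatrix S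

variable (L : ℤ) (S : ι → ℤ)

theorem boxBallPeriodMatrix_transpose : (boxBallPeriodMatrix L S)ᵀ = boxBallPeriodMatrix L S := by
  rw [boxBallPeriodMatrix, transpose_add, diagonal_transpose, transpose_smul, minMatrix_transpose]

theorem boxBallPeriodMatrix_mulVec_one : boxBallPeriodMatrix L S *ᵥ 1 = fun _ => (L : ℝ) := by
  ext i
  rw [boxBallPeriodMatrix, add_mulVec, smul_mulVec, Pi.add_apply, mulVec_diagonal, Pi.smul_apply,
    smul_eq_mul]
  simp only [Pi.one_apply, mulVec, dotProduct, minMatrix, of_apply, mul_one]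
  push_cast
  ring

theorem dotProduct_self_le_dotProduct_boxBallPeriodMatrix_mulVec {L : ℤ} {S : ι → ℤ}
    (hS : ∀ i, 0 ≤ S i) (hL : ∀ i, 2 * ∑ k, min (S i) (S k) < L) (x : ι → ℝ) :
    x ⬝ᵥ x ≤ x ⬝ᵥ boxBallPeriodMatrix L S *ᵥ x := by
  have hmin := (posSemidef_minMatrix hS).dotProduct_mulVec_nonneg x
  rw [star_trivial] at hmin
  have hdiag :
      x ⬝ᵥ x ≤ x ⬝ᵥ diagonal (fun i => ((L - 2 * ∑ k, min (S i) (S k) : ℤ) : ℝ)) *ᵥ x := by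
    refine Finset.sum_le_sum fun i _ => ?_
    have : (1 : ℝ) ≤ ((L - 2 * ∑ k, min (S i) (S k) : ℤ) : ℝ) := by
      exact_mod_cast (by linarith [hL i] : 1 ≤ L - 2 * ∑ k, min (S i) (S k))
    rw [mulVec_diagonal]
    nlinarith [mul_self_nonneg (x i)]
  rw [boxBallPeriodMatrix, add_mulVec, dotProduct_add, smul_mulVec, dotProduct_smul]
  simp only [smul_eq_mul]
  linarith

end BoxBallPeriodMatrix

theorem tropTheta_boxBallPeriodMatrix_add_const {g : ℕ} {L : ℤ} {S : Fin g → ℤ}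
    (hS : ∀ i, 0 ≤ S i) (hL : ∀ i, 2 * ∑ k, min (S i) (S k) < L) (z : Fin g → ℝ) :
    tropTheta g (boxBallPeriodMatrix L S) (z + fun _ => (L : ℝ)) =
      tropTheta g (boxBallPeriodMatrix L S) z - tropThetaTerm (boxBallPeriodMatrix L S) z 1 := by
  have hbdd := bddBelow_range_tropThetaTerm _ one_pos (fun x => (one_mul (x ⬝ᵥ x)).trans_le
    (dotProduct_self_le_dotProduct_boxBallPeriodMatrix_mulVec hS hL x)) z
  have hone : (Int.cast ∘ (1 : Fin g → ℤ) : Fin g → ℝ) = 1 := funext fun _ => Int.cast_one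
  simpa [hone, boxBallPeriodMatrix_mulVec_one] using
    tropTheta_add_mulVec (boxBallPeriodMatrix_transpose L S) hbdd 1

/-- the tropical theta function solution of the periodic box and ball
system, `U n t = Θ n t + Θ (n+1) (t+1) - Θ (n+1) t - Θ n (t+1)` with
`Θ n t = Θ(n·e - t·s + c; B)` and period matrix
`B i j = (L - 2 A i) δ_{ij} + 2 min (S i) (S j)`, satisfies the periodic boundary
condition `U (n+L) t = U n t`. -/
theorem stmt15 (g : ℕ) (hg : 1 ≤ g) (S : Fin g → ℤ)
    (hpos : ∀ i, 0 < S i) (hmono : Monotone S)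
    (A : Fin g → ℤ) (hA : ∀ i, A i = ∑ k, min (S i) (S k))
    (L : ℤ) (hL : L > 2 * A ⟨g - 1, by omega⟩)
    (B : Matrix (Fin g) (Fin g) ℝ)
    (hB : ∀ i j, B i j = (((L : ℝ)) - 2 * ((A i : ℤ) : ℝ)) * (if i = j then 1 else 0)
        + 2 * ((min (S i) (S j) : ℤ) : ℝ))
    (c : Fin g → ℝ)
    (Θ : ℤ → ℤ → ℝ)
    (hΘ : ∀ n t : ℤ, Θ n t =
      tropTheta g B (fun i => (n : ℝ) * 1 - (t : ℝ) * ((S i : ℤ) : ℝ) + c i))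
    (U : ℤ → ℤ → ℝ)
    (hU : ∀ n t : ℤ, U n t = Θ n t + Θ (n+1) (t+1) - Θ (n+1) t - Θ n (t+1)) :
    ∀ n t : ℤ, U (n + L) t = U n t := by
  have hA_lt : ∀ i, 2 * ∑ k, min (S i) (S k) < L := fun i => by
    have : A i ≤ A ⟨g - 1, by omega⟩ := by
      rw [hA, hA]
      exact Finset.sum_le_sum fun k _ => min_le_min_right _ (hmono (show i.val ≤ g - 1 by omega))
    rw [← hA]; omega
  obtain rfl : B = boxBallPeriodMatrix L S := by
    ext i j
    rw [hB, hA, boxBallPeriodMatrix]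
    by_cases hij : i = j <;> simp [hij, minMatrix]
  set s : Fin g → ℝ := fun i => S i
  have hΘ' : ∀ n t : ℤ,
      Θ n t = tropTheta g (boxBallPeriodMatrix L S) ((n : ℝ) • 1 - (t : ℝ) • s + c) := hΘ
  have hshift : ∀ n t : ℤ, Θ (n + L) t =
      Θ n t - tropThetaTerm (boxBallPeriodMatrix L S) ((n : ℝ) • 1 - (t : ℝ) • s + c) 1 := by
    intro n t
    rw [hΘ', hΘ', ← tropTheta_boxBallPeriodMatrix_add_const (fun i => (hpos i).le) hA_lt]
    congr 1
    ext i
    simp only [Int.cast_add, Pi.add_apply, Pi.sub_apply, Pi.smul_apply, Pi.one_apply, smul_eq_mul,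
      mul_one]
    ring
  intro n t
  rw [hU, hU, add_right_comm n L 1, hshift, hshift, hshift, hshift]
  simp only [tropThetaTerm, dotProduct_add, dotProduct_sub, dotProduct_smul, smul_eq_mul]
  push_cast
  ring
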